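/- Let p be a probability vector with positive entries, W an M×M₀ matrix, A = D_p^{-1/2} Σ_p W of full column rank, and P = A(AᵀA)^{-1}Aᵀ. Then (I_M − P) D_p^{-1/2} Σ_p D_p^{-1/2} (I_M − P) = D_p^{-1/2}(Σ_p − Σ_p W (Wᵀ Σ_p W)^{-1} Wᵀ Σ_p) D_p^{-1/2}. -/

import Mathlib

/-!
Write `D = D_p^{-1/2}` and `S = Σ_p`. Since `1ᵀ S = 0` and `S D_p^{-1} = 1 - p 1ᵀ`, one has
`S D² S = S`, so `T = D S D` fixes `A = D S W` on both sides: `T A = A` and `Aᵀ T = Aᵀ`.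
The matrix `P = A (Aᵀ A)⁻¹ Aᵀ` is idempotent (also when `Aᵀ A` is singular, as then `P = 0`
under the convention `0⁻¹ = 0`), so `P T = T P = P` gives `(1 - P) T (1 - P) = T - P`;
finally `Aᵀ A = Wᵀ S W` turns `T - P` into the right-hand side.
-/

open Matrix

theorem one_sub_mul_mul_one_sub_eq_sub {R : Type*} [Ring R] {P T : R} (hP : IsIdempotentElem P)
    (hPT : P * T = P) (hTP : T * P = P) : (1 - P) * T * (1 - P) = T - P := by
  have expand : (1 - P) * T * (1 - P) = T - P * T - T * P + P * T * P := by noncomm_ring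
  rw [expand, hPT, hTP, hP.eq]
  abel

namespace Matrix

variable {m n R K : Type*} [Fintype m] [DecidableEq n]

section CommRing

variable [CommRing R]

theorem nonsing_inv_mul_self_mul_nonsing_inv [Fintype n] (G : Matrix n n R) :
    G⁻¹ * G * G⁻¹ = G⁻¹ := by
  by_cases h : IsUnit G.det
  · rw [nonsing_inv_mul _ h, Matrix.one_mul]
  · rw [nonsing_inv_apply_not_isUnit _ h, Matrix.mul_zero]

theorem isIdempotentElem_mul_inv_transpose_mul_self_mul_transpose [Fintype n]
    (A : Matrix m n R) : IsIdempotentElem (A * (Aᵀ * A)⁻¹ * Aᵀ) := by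
  calc A * (Aᵀ * A)⁻¹ * Aᵀ * (A * (Aᵀ * A)⁻¹ * Aᵀ)
      = A * ((Aᵀ * A)⁻¹ * (Aᵀ * A) * (Aᵀ * A)⁻¹) * Aᵀ := by simp only [Matrix.mul_assoc]
    _ = A * (Aᵀ * A)⁻¹ * Aᵀ := by rw [nonsing_inv_mul_self_mul_nonsing_inv]

theorem one_sub_proj_mul_mul_one_sub_proj [Fintype n] [DecidableEq m] {A : Matrix m n R}
    {T : Matrix m m R} (hTA : T * A = A) (hAT : Aᵀ * T = Aᵀ) :
    (1 - A * (Aᵀ * A)⁻¹ * Aᵀ) * T * (1 - A * (Aᵀ * A)⁻¹ * Aᵀ) = T - A * (Aᵀ * A)⁻¹ * Aᵀ := by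
  refine one_sub_mul_mul_one_sub_eq_sub
    (isIdempotentElem_mul_inv_transpose_mul_self_mul_transpose A) ?_ ?_
  · rw [Matrix.mul_assoc _ Aᵀ, hAT]
  · rw [← Matrix.mul_assoc, ← Matrix.mul_assoc, hTA]

theorem one_sub_proj_mul_mul_one_sub_proj_of_mul_mul_eq_self [Fintype n] [DecidableEq m]
    {D S : Matrix m m R} {W : Matrix m n R} (hD : D.IsSymm) (hS : S.IsSymm)
    (hSDDS : S * (D * D) * S = S) :
    (1 - D * S * W * ((D * S * W)ᵀ * (D * S * W))⁻¹ * (D * S * W)ᵀ) * (D * S * D) *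
        (1 - D * S * W * ((D * S * W)ᵀ * (D * S * W))⁻¹ * (D * S * W)ᵀ) =
      D * (S - S * W * (Wᵀ * S * W)⁻¹ * Wᵀ * S) * D := by
  have htranspose : (D * S * W)ᵀ = Wᵀ * S * D := by
    rw [transpose_mul, transpose_mul, hS.eq, hD.eq, Matrix.mul_assoc]
  have hgram : (D * S * W)ᵀ * (D * S * W) = Wᵀ * S * W := by
    rw [htranspose]
    calc Wᵀ * S * D * (D * S * W) = Wᵀ * (S * (D * D) * S) * W := by
          simp only [Matrix.mul_assoc]
      _ = Wᵀ * S * W := by rw [hSDDS, Matrix.mul_assoc]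
  have hTA : D * S * D * (D * S * W) = D * S * W := by
    calc D * S * D * (D * S * W) = D * (S * (D * D) * S) * W := by simp only [Matrix.mul_assoc]
      _ = D * S * W := by rw [hSDDS]
  have hAT : (D * S * W)ᵀ * (D * S * D) = (D * S * W)ᵀ := by
    rw [htranspose]
    calc Wᵀ * S * D * (D * S * D) = Wᵀ * (S * (D * D) * S) * D := by simp only [Matrix.mul_assoc]
      _ = Wᵀ * S * D := by rw [hSDDS]
  rw [one_sub_proj_mul_mul_one_sub_proj hTA hAT, hgram, htranspose]
  simp only [mul_sub, sub_mul, Matrix.mul_assoc]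

theorem isSymm_diagonal_sub_vecMulVec (p : n → R) : (diagonal p - vecMulVec p p).IsSymm :=
  (isSymm_diagonal p).sub (transpose_vecMulVec p p)

end CommRing

section Field

variable [Field K]

theorem diagonal_sub_vecMulVec_mul_diagonal_inv_mul [Fintype n] {p : n → K} (hp : ∀ i, p i ≠ 0)
    (hsum : ∑ i, p i = 1) :
    (diagonal p - vecMulVec p p) * diagonal p⁻¹ * (diagonal p - vecMulVec p p) =
      diagonal p - vecMulVec p p := by
  have hcol : (1 : n → K) ᵥ* (diagonal p - vecMulVec p p) = 0 := by
    ext j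
    simp [vecMul_sub, vecMul_vecMulVec, vecMul_diagonal, dotProduct, hsum]
  have hright : (diagonal p - vecMulVec p p) * diagonal p⁻¹ = 1 - vecMulVec p 1 := by
    have hp' : diagonal p * diagonal p⁻¹ = 1 := by
      rw [diagonal_mul_diagonal, ← diagonal_one]
      congr 1
      ext i
      simp [hp i]
    have hrow : p ᵥ* diagonal p⁻¹ = 1 := by ext j; simp [vecMul_diagonal, hp j]
    rw [sub_mul, hp', vecMulVec_mul, hrow]
  rw [hright, sub_mul, Matrix.one_mul, vecMulVec_mul, hcol, vecMulVec_zero, sub_zero]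

end Field

end Matrix

theorem proj_variance_identity_general {M M₀ : ℕ} (p : Fin M → ℝ) (hp : ∀ r, 0 < p r)
    (hsum : ∑ r, p r = 1) (W : Matrix (Fin M) (Fin M₀) ℝ)
    (A : Matrix (Fin M) (Fin M₀) ℝ)
    (hA : A = Matrix.diagonal (fun r => (Real.sqrt (p r))⁻¹) *
        (Matrix.diagonal p - Matrix.vecMulVec p p) * W) :
    ((1 : Matrix (Fin M) (Fin M) ℝ) - A * (Aᵀ * A)⁻¹ * Aᵀ) *
        (Matrix.diagonal (fun r => (Real.sqrt (p r))⁻¹) *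
          (Matrix.diagonal p - Matrix.vecMulVec p p) *
          Matrix.diagonal (fun r => (Real.sqrt (p r))⁻¹)) *
        ((1 : Matrix (Fin M) (Fin M) ℝ) - A * (Aᵀ * A)⁻¹ * Aᵀ) =
      Matrix.diagonal (fun r => (Real.sqrt (p r))⁻¹) *
        ((Matrix.diagonal p - Matrix.vecMulVec p p) -
          (Matrix.diagonal p - Matrix.vecMulVec p p) * W *
            (Wᵀ * (Matrix.diagonal p - Matrix.vecMulVec p p) * W)⁻¹ *
            Wᵀ * (Matrix.diagonal p - Matrix.vecMulVec p p)) *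
        Matrix.diagonal (fun r => (Real.sqrt (p r))⁻¹) := by
  subst hA
  have hDD : diagonal (fun r => (Real.sqrt (p r))⁻¹) * diagonal (fun r => (Real.sqrt (p r))⁻¹) =
      diagonal p⁻¹ := by
    rw [diagonal_mul_diagonal]
    congr 1
    funext r
    rw [← mul_inv, Real.mul_self_sqrt (hp r).le, Pi.inv_apply]
  refine one_sub_proj_mul_mul_one_sub_proj_of_mul_mul_eq_self (isSymm_diagonal _)
    (isSymm_diagonal_sub_vecMulVec p) ?_
  rw [hDD]
  exact diagonal_sub_vecMulVec_mul_diagonal_inv_mul (fun r => (hp r).ne') hsum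

/-- `(I - P) D_p^{-1/2} Σ_p D_p^{-1/2} (I - P)
  = D_p^{-1/2} (Σ_p - Σ_p W (Wᵀ Σ_p W)⁻¹ Wᵀ Σ_p) D_p^{-1/2}`. -/
theorem proj_variance_identity {M M₀ : ℕ} (p : Fin M → ℝ) (hp : ∀ r, 0 < p r)
    (hsum : ∑ r, p r = 1) (W : Matrix (Fin M) (Fin M₀) ℝ)
    (A : Matrix (Fin M) (Fin M₀) ℝ)
    (hA : A = Matrix.diagonal (fun r => (Real.sqrt (p r))⁻¹) *
        (Matrix.diagonal p - Matrix.vecMulVec p p) * W)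
    (hrank : A.rank = M₀) :
    ((1 : Matrix (Fin M) (Fin M) ℝ) - A * (Aᵀ * A)⁻¹ * Aᵀ) *
        (Matrix.diagonal (fun r => (Real.sqrt (p r))⁻¹) *
          (Matrix.diagonal p - Matrix.vecMulVec p p) *
          Matrix.diagonal (fun r => (Real.sqrt (p r))⁻¹)) *
        ((1 : Matrix (Fin M) (Fin M) ℝ) - A * (Aᵀ * A)⁻¹ * Aᵀ) =
      Matrix.diagonal (fun r => (Real.sqrt (p r))⁻¹) *
        ((Matrix.diagonal p - Matrix.vecMulVec p p) -
          (Matrix.diagonal p - Matrix.vecMulVec p p) * W *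
            (Wᵀ * (Matrix.diagonal p - Matrix.vecMulVec p p) * W)⁻¹ *
            Wᵀ * (Matrix.diagonal p - Matrix.vecMulVec p p)) *
        Matrix.diagonal (fun r => (Real.sqrt (p r))⁻¹) :=
  proj_variance_identity_general p hp hsum W A hA
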